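/- arXiv:1404.4914 — 3 statements merged into one kernel-verified Lean document; each statement's English description precedes it below -/
import Mathlib

section
/- With the data of the construction of M(a,α,p,q), assume α ≠ 0. Then the holomorphic vector field H^{a,α}(z₁,z₂) = ((e^{αz₁} − 1)/α)·a(z₂)·∂/∂z₁ + iz₂·∂/∂z₂ is tangent to M(a,α,p,q), i.e. Re[ ((e^{αz₁} − 1)/α)·a(z₂)·ρ_{z₁}(z₁,z₂) + iz₂·ρ_{z₂}(z₁,z₂) ] = 0 for all (z₁,z₂) ∈ M(a,α,p,q), where ρ_{z₁} = 1/2 + f_t(z₂, Im z₁)/(2i) and ρ_{z₂} = P_{z₂}(z₂) + f_{z₂}(z₂, Im z₁). -/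
open Complex Metric Set

/-- The Wirtinger derivative `u_z = (∂u/∂x − i ∂u/∂y)/2` of `u` at `z`. -/
noncomputable def wirt (u : ℂ → ℂ) (z : ℂ) : ℂ :=
  (fderiv ℝ u z 1 - Complex.I * fderiv ℝ u z Complex.I) / 2

/-- The holomorphic function `a(z) = Σ_{n≥1} aₙ zⁿ` (with `a 0 = 0`). -/
noncomputable def Afn (a : ℕ → ℂ) (z : ℂ) : ℂ := ∑' n : ℕ, a n * z ^ n

/-- The primitive-type series `Σ_{n≥1} (aₙ/n) zⁿ`. -/
noncomputable def Sfn (a : ℕ → ℂ) (z : ℂ) : ℂ := ∑' n : ℕ, a n / (n : ℂ) * z ^ n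

/-- The series `Σ_{n≥1} (aₙ/(i n)) zⁿ`. -/
noncomputable def Tfn (a : ℕ → ℂ) (z : ℂ) : ℂ :=
  ∑' n : ℕ, a n / (Complex.I * (n : ℂ)) * z ^ n

/-- `R(z₂) = q(|z₂|) − Re (Σ_{n≥1} (aₙ/n) z₂ⁿ)`. -/
noncomputable def Rfn (a : ℕ → ℂ) (q : ℝ → ℝ) (z : ℂ) : ℝ :=
  q ‖z‖ - (Sfn a z).re

/-- `Q₀(z₂) = tan (R(z₂))`. -/
noncomputable def Q0fn (a : ℕ → ℂ) (q : ℝ → ℝ) (z : ℂ) : ℝ := Real.tan (Rfn a q z)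

/-- `P₁(z₂) = exp[p(|z₂|) + Re (Σ (aₙ/(i n)) z₂ⁿ) − log |cos (R(z₂))|]` for `z₂ ≠ 0`,
`P₁(0) = 0`. -/
noncomputable def P1fn (a : ℕ → ℂ) (q p : ℝ → ℝ) (z : ℂ) : ℝ :=
  if z = 0 then 0
  else Real.exp (p ‖z‖ + (Tfn a z).re - Real.log |Real.cos (Rfn a q z)|)

/-- `f(z₂,t) = −(1/α) log |cos(R(z₂)+αt)/cos(R(z₂))|` if `α ≠ 0`, `tan(R(z₂))·t` if `α = 0`. -/
noncomputable def ffn (α : ℝ) (a : ℕ → ℂ) (q : ℝ → ℝ) (z : ℂ) (t : ℝ) : ℝ :=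
  if α = 0 then Real.tan (Rfn a q z) * t
  else -(1 / α) * Real.log |Real.cos (Rfn a q z + α * t) / Real.cos (Rfn a q z)|

/-- `P = (1/α) log(1 + α P₁)` if `α ≠ 0`, `P = P₁` if `α = 0`. -/
noncomputable def Pfn (α : ℝ) (a : ℕ → ℂ) (q p : ℝ → ℝ) (z : ℂ) : ℝ :=
  if α = 0 then P1fn a q p z else (1 / α) * Real.log (1 + α * P1fn a q p z)

/-- `L^α(z₁) = (e^{αz₁} − 1)/α` if `α ≠ 0`, `L⁰(z₁) = z₁`. -/
noncomputable def Lfn (α : ℝ) (z : ℂ) : ℂ :=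
  if α = 0 then z else (Complex.exp ((α : ℂ) * z) - 1) / (α : ℂ)


/-!
For a real function `v`, `Re (i z₂ v_{z₂})` is half the derivative of `θ ↦ v (e^{iθ} z₂)` at
`θ = 0`. Along this rotation `q(|z₂|)` and `p(|z₂|)` are constant and the power series can be
differentiated termwise, which gives the angular derivatives `Im a(z₂)` of `R`,
`P₁ (Re a + tan R · Im a)` of `P₁`, and hence those of `P` and `f`, while `f_t = tan (R + α Im z₁)`.
On `M` the defining equation gives `e^{α Re z₁} = cos (R + α Im z₁) / ((1 + α P₁) cos R)`, i.e.
`e^{α z₁} (1 - i tan (R + α Im z₁)) = (1 - i tan R) / (1 + α P₁)`, and with this identity the real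
part of `H^{a,α} ρ` cancels.
-/

theorem HasDerivAt.re {f : ℝ → ℂ} {f' : ℂ} {x : ℝ} (h : HasDerivAt f f' x) :
    HasDerivAt (fun y => (f y).re) f'.re x :=
  reCLM.hasFDerivAt.comp_hasDerivAt x h

theorem norm_div_natCast_le (x : ℂ) (n : ℕ) : ‖x / n‖ ≤ ‖x‖ := by
  rcases Nat.eq_zero_or_pos n with rfl | hn
  · simp
  · rw [norm_div, Complex.norm_natCast]
    exact div_le_self (norm_nonneg x) (by exact_mod_cast hn)

theorem natCast_mul_div_natCast {x : ℂ} (n : ℕ) (hx : n = 0 → x = 0) :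
    (n : ℂ) * (x / n) = x := by
  rcases Nat.eq_zero_or_pos n with rfl | hn
  · simp [hx rfl]
  · exact mul_div_cancel₀ x (by exact_mod_cast hn.ne')

theorem norm_exp_ofReal_mul_I_mul (θ : ℝ) (w : ℂ) : ‖cexp (θ * I) * w‖ = ‖w‖ := by
  rw [norm_mul, norm_exp_ofReal_mul_I, one_mul]

theorem summable_norm_mul_pow_of_summable_on_ball {a : ℕ → ℂ} {ε : ℝ}
    (hsum : ∀ z ∈ ball (0 : ℂ) ε, Summable fun n => a n * z ^ n) {z : ℂ}
    (hz : z ∈ ball (0 : ℂ) ε) : Summable fun n => ‖a n‖ * ‖z‖ ^ n := by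
  obtain ⟨r, hzr, hrε⟩ := exists_between (mem_ball_zero_iff.mp hz)
  have hr : 0 ≤ r := (norm_nonneg z).trans hzr.le
  have hrad : (Real.toNNReal r : ENNReal) ≤ (FormalMultilinearSeries.ofScalars ℂ a).radius := by
    refine FormalMultilinearSeries.le_radius_of_tendsto _ (l := 0) ?_
    have := (hsum r (by simpa [abs_of_nonneg hr] using hrε)).tendsto_atTop_zero.norm
    simpa [FormalMultilinearSeries.ofScalars_norm, abs_of_nonneg hr, hr] using this
  have := (FormalMultilinearSeries.ofScalars ℂ a).summable_norm_mul_pow (r := ‖z‖₊)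
    (lt_of_lt_of_le (by simpa [← NNReal.coe_lt_coe, hr] using hzr) hrad)
  simpa [FormalMultilinearSeries.ofScalars_norm] using this

theorem hasDerivAt_exp_ofReal_mul_I_mul (z : ℂ) (θ : ℝ) :
    HasDerivAt (fun θ : ℝ => cexp (θ * I) * z) (I * (cexp (θ * I) * z)) θ := by
  have h := ((hasDerivAt_mul_const I).cexp.mul_const z).comp_ofReal (z := θ)
  convert h using 1
  ring

theorem hasDerivAt_tsum_mul_exp_ofReal_mul_I_mul_pow {b c : ℕ → ℂ} {w : ℂ}
    (hb : Summable fun n => ‖b n‖ * ‖w‖ ^ n) (hcb : ∀ n, ‖c n‖ ≤ ‖b n‖)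
    (hnc : ∀ n : ℕ, (n : ℂ) * c n = b n) :
    HasDerivAt (fun θ : ℝ => ∑' n, c n * (cexp (θ * I) * w) ^ n) (I * ∑' n, b n * w ^ n) 0 := by
  have hterm : ∀ (n : ℕ) (θ : ℝ), HasDerivAt (fun θ : ℝ => c n * (cexp (θ * I) * w) ^ n)
      (I * b n * (cexp (θ * I) * w) ^ n) θ := by
    intro n θ
    refine (((hasDerivAt_exp_ofReal_mul_I_mul w θ).pow n).const_mul (c n)).congr_deriv ?_
    rw [← hnc]
    rcases n with _ | n
    · simp
    · push_cast; ring
  have hnorm : ∀ (n : ℕ) (θ : ℝ), ‖I * b n * (cexp (θ * I) * w) ^ n‖ = ‖b n‖ * ‖w‖ ^ n := by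
    intro n θ
    simp [norm_exp_ofReal_mul_I]
  have hc : Summable fun n => ‖c n‖ * ‖w‖ ^ n :=
    hb.of_nonneg_of_le (fun n => by positivity) (fun n => by gcongr; exact hcb n)
  have h0 : Summable fun n => c n * (cexp ((0 : ℝ) * I) * w) ^ n :=
    hc.of_norm_bounded (fun n => by simp)
  have h := hasDerivAt_tsum hb hterm (fun n θ => (hnorm n θ).le) h0 0
  simpa [tsum_mul_left, mul_assoc] using h

theorem re_mul_wirt_ofReal {v : ℂ → ℝ} {z : ℂ} (hv : DifferentiableAt ℝ v z) (w : ℂ) :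
    (w * wirt (fun x => (v x : ℂ)) z).re = fderiv ℝ v z w / 2 := by
  have hf : fderiv ℝ (fun x => (v x : ℂ)) z = ofRealCLM.comp (fderiv ℝ v z) :=
    (ofRealCLM.hasFDerivAt.comp z hv.hasFDerivAt).fderiv
  have hw : fderiv ℝ v z w = w.re * fderiv ℝ v z 1 + w.im * fderiv ℝ v z I := by
    have hw : w = w.re • (1 : ℂ) + w.im • I := by simp [real_smul, re_add_im]
    conv_lhs => rw [hw, map_add, map_smul, map_smul, smul_eq_mul, smul_eq_mul]
  rw [wirt, hf, hw]
  simp only [ContinuousLinearMap.comp_apply, ofRealCLM_apply, mul_re, mul_im, div_ofNat_re,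
    div_ofNat_im, sub_re, sub_im, ofReal_re, ofReal_im, I_re, I_im, zero_mul, mul_zero, one_mul,
    sub_self, sub_zero, zero_add, zero_sub]
  ring

theorem re_I_mul_mul_wirt_ofReal {v : ℂ → ℝ} {z : ℂ} {d : ℝ} (hv : DifferentiableAt ℝ v z)
    (hd : HasDerivAt (fun θ : ℝ => v (cexp (θ * I) * z)) d 0) :
    (I * z * wirt (fun x => (v x : ℂ)) z).re = d / 2 := by
  have hrot := hasDerivAt_exp_ofReal_mul_I_mul z 0
  simp only [ofReal_zero, zero_mul, Complex.exp_zero, one_mul] at hrot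
  have := hv.hasFDerivAt.comp_hasDerivAt_of_eq 0 hrot (by simp)
  rw [re_mul_wirt_ofReal hv, this.unique hd]

theorem cos_add_pos_of_abs_le_one_of_abs_lt_half {r s : ℝ} (hr : |r| ≤ 1) (hs : |s| < 1 / 2) :
    0 < Real.cos (r + s) := by
  have hπ := Real.pi_gt_three
  apply Real.cos_pos_of_mem_Ioo
  constructor <;> linarith [abs_le.mp hr, abs_lt.mp hs]

theorem abs_mul_im_lt_half {α : ℝ} {z : ℂ} (hα : α ≠ 0)
    (hz : z ∈ ball (0 : ℂ) (1 / (2 * |α|))) : |α * z.im| < 1 / 2 := by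
  have hα' : 0 < |α| := abs_pos.mpr hα
  have h := (abs_im_le_norm z).trans_lt (mem_ball_zero_iff.mp hz)
  rw [abs_mul]
  calc |α| * |z.im| < |α| * (1 / (2 * |α|)) := by gcongr
    _ = 1 / 2 := by field_simp

theorem hasDerivAt_log_abs_cos_add_div_cos {r s : ℝ} (hrs : Real.cos (r + s) ≠ 0)
    (hr : Real.cos r ≠ 0) :
    HasDerivAt (fun r => Real.log |Real.cos (r + s) / Real.cos r|)
      (Real.tan r - Real.tan (r + s)) r := by
  have h := (((hasDerivAt_id' r).add_const s).cos.fun_div (hasDerivAt_id' r).cos hr).log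
    (div_ne_zero hrs hr)
  simp only [Real.log_abs]
  refine h.congr_deriv ?_
  simp only [Real.tan_eq_sin_div_cos]
  field_simp
  ring

theorem hasDerivAt_log_abs_cos_add_mul_div_cos {r α t : ℝ} (hrt : Real.cos (r + α * t) ≠ 0)
    (hr : Real.cos r ≠ 0) :
    HasDerivAt (fun t => Real.log |Real.cos (r + α * t) / Real.cos r|)
      (-(α * Real.tan (r + α * t))) t := by
  have h := ((((hasDerivAt_id' t).const_mul α).const_add r).cos.div_const (Real.cos r)).log
    (div_ne_zero hrt hr)
  simp only [Real.log_abs]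
  refine h.congr_deriv ?_
  simp only [Real.tan_eq_sin_div_cos]
  field_simp

theorem ofReal_mul_exp_mul_one_sub_tan_mul_I {α r P₁ : ℝ} {z : ℂ} (hr : Real.cos r ≠ 0)
    (hrt : Real.cos (r + α * z.im) ≠ 0) (hC : 1 + α * P₁ ≠ 0)
    (hx : Real.exp (α * z.re) = Real.cos (r + α * z.im) / ((1 + α * P₁) * Real.cos r)) :
    ((1 + α * P₁ : ℝ) : ℂ) * (cexp (α * z) * (1 - Real.tan (r + α * z.im) * I))
      = 1 - Real.tan r * I := by
  have hcos : Real.cos r = Real.cos (r + α * z.im) * Real.cos (α * z.im)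
      + Real.sin (r + α * z.im) * Real.sin (α * z.im) := by
    rw [← Real.cos_sub, add_sub_cancel_right]
  have hsin : Real.sin r = Real.sin (r + α * z.im) * Real.cos (α * z.im)
      - Real.cos (r + α * z.im) * Real.sin (α * z.im) := by
    rw [← Real.sin_sub, add_sub_cancel_right]
  apply Complex.ext <;>
    simp only [mul_re, mul_im, sub_re, sub_im, one_re, one_im, ofReal_re, ofReal_im, I_re, I_im,
      exp_re, exp_im, mul_zero, zero_mul, sub_zero, add_zero, mul_one, zero_sub, hx,
      Real.tan_eq_sin_div_cos] <;>
    field_simp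
  · rw [hcos]; ring
  · rw [hsin]; ring

theorem re_tangency_identity {α r P₁ : ℝ} {z A : ℂ} (hα : α ≠ 0) (hr : Real.cos r ≠ 0)
    (hrt : Real.cos (r + α * z.im) ≠ 0) (hC : 1 + α * P₁ ≠ 0)
    (hx : Real.exp (α * z.re) = Real.cos (r + α * z.im) / ((1 + α * P₁) * Real.cos r)) :
    ((cexp (α * z) - 1) / α * A * (1 / 2 + (Real.tan (r + α * z.im) : ℂ) / (2 * I))).re
      + P₁ * (A.re + Real.tan r * A.im) / (1 + α * P₁) / 2
      + (Real.tan (r + α * z.im) - Real.tan r) / α * A.im / 2 = 0 := by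
  have hkey := ofReal_mul_exp_mul_one_sub_tan_mul_I hr hrt hC hx
  set τ := Real.tan (r + α * z.im)
  have h : (cexp (α * z) - 1) / α * A * (1 / 2 + (τ : ℂ) / (2 * I))
      = ((1 + α * P₁ : ℝ) * (cexp (α * z) * (1 - τ * I)) - (1 + α * P₁ : ℝ) * (1 - τ * I))
        * A / ((2 * α * (1 + α * P₁) : ℝ) : ℂ) := by
    have hC' : ((1 + α * P₁ : ℝ) : ℂ) ≠ 0 := by exact_mod_cast hC
    push_cast at hC' ⊢
    field_simp
    ring_nf
    simp only [I_sq]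
    ring
  rw [h, hkey, div_ofReal_re]
  simp only [mul_re, mul_im, sub_re, sub_im, one_re, one_im, ofReal_re, ofReal_im, I_re, I_im,
    mul_zero, zero_mul, sub_zero, add_zero, mul_one, zero_sub]
  field_simp
  ring

section Construction

variable {α : ℝ} {a : ℕ → ℂ} {q p : ℝ → ℝ} {w : ℂ} {t : ℝ}

theorem Afn_zero (ha0 : a 0 = 0) : Afn a 0 = 0 := by
  rw [Afn, tsum_eq_single 0 fun n hn => by simp [hn]]
  simp [ha0]

theorem hasDerivAt_re_Sfn_rotation (ha0 : a 0 = 0) (hw : Summable fun n => ‖a n‖ * ‖w‖ ^ n) :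
    HasDerivAt (fun θ : ℝ => (Sfn a (cexp (θ * I) * w)).re) (-(Afn a w).im) 0 := by
  have h := hasDerivAt_tsum_mul_exp_ofReal_mul_I_mul_pow hw
    (fun n => norm_div_natCast_le (a n) n) (fun n => natCast_mul_div_natCast n fun hn => hn ▸ ha0)
  simpa [Sfn, Afn] using h.re

theorem hasDerivAt_re_Tfn_rotation (ha0 : a 0 = 0) (hw : Summable fun n => ‖a n‖ * ‖w‖ ^ n) :
    HasDerivAt (fun θ : ℝ => (Tfn a (cexp (θ * I) * w)).re) (Afn a w).re 0 := by
  have h := hasDerivAt_tsum_mul_exp_ofReal_mul_I_mul_pow (b := fun n => a n / I)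
    (c := fun n => a n / (I * n)) (by simpa using hw)
    (fun n => by rw [div_mul_eq_div_div]; exact norm_div_natCast_le _ n)
    (fun n => by
      rw [div_mul_eq_div_div]
      exact natCast_mul_div_natCast n fun hn => by simp [hn, ha0])
  have hA : I * ∑' n, a n / I * w ^ n = Afn a w := by
    rw [Afn, ← tsum_mul_left]
    exact tsum_congr fun n => by field_simp
  rw [hA] at h
  exact h.re

theorem hasDerivAt_Rfn_rotation (ha0 : a 0 = 0)
    (hw : Summable fun n => ‖a n‖ * ‖w‖ ^ n) :
    HasDerivAt (fun θ : ℝ => Rfn a q (cexp (θ * I) * w)) (Afn a w).im 0 := by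
  have h := (hasDerivAt_re_Sfn_rotation ha0 hw).const_sub (q ‖w‖)
  rw [neg_neg] at h
  simpa only [Rfn, norm_exp_ofReal_mul_I_mul] using h

theorem hasDerivAt_P1fn_rotation (ha0 : a 0 = 0)
    (hw : Summable fun n => ‖a n‖ * ‖w‖ ^ n) (hw0 : w ≠ 0) (hcos : Real.cos (Rfn a q w) ≠ 0) :
    HasDerivAt (fun θ : ℝ => P1fn a q p (cexp (θ * I) * w))
      (P1fn a q p w * ((Afn a w).re + Real.tan (Rfn a q w) * (Afn a w).im)) 0 := by
  have hR := hasDerivAt_Rfn_rotation (q := q) ha0 hw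
  have h := (((hasDerivAt_re_Tfn_rotation ha0 hw).const_add (p ‖w‖)).fun_sub
    (hR.cos.log (by simpa using hcos))).exp
  have hP1 : ∀ θ : ℝ, P1fn a q p (cexp (θ * I) * w) = Real.exp (p ‖w‖
      + (Tfn a (cexp (θ * I) * w)).re - Real.log (Real.cos (Rfn a q (cexp (θ * I) * w)))) := by
    intro θ
    rw [P1fn, if_neg (mul_ne_zero (Complex.exp_ne_zero _) hw0), norm_exp_ofReal_mul_I_mul,
      Real.log_abs]
  have hP1w := hP1 0
  simp only [ofReal_zero, zero_mul, Complex.exp_zero, one_mul] at hP1w h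
  simp only [hP1]
  refine h.congr_deriv ?_
  rw [← hP1w, Real.tan_eq_sin_div_cos]
  field_simp
  ring

theorem hasDerivAt_Pfn_rotation (hα : α ≠ 0) (ha0 : a 0 = 0)
    (hw : Summable fun n => ‖a n‖ * ‖w‖ ^ n) (hw0 : w ≠ 0) (hcos : Real.cos (Rfn a q w) ≠ 0)
    (hC : 1 + α * P1fn a q p w ≠ 0) :
    HasDerivAt (fun θ : ℝ => Pfn α a q p (cexp (θ * I) * w))
      (P1fn a q p w * ((Afn a w).re + Real.tan (Rfn a q w) * (Afn a w).im)
        / (1 + α * P1fn a q p w)) 0 := by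
  have h := (((hasDerivAt_P1fn_rotation (p := p) ha0 hw hw0 hcos).const_mul α).const_add 1).log
    (by simpa using hC) |>.const_mul (1 / α)
  simp only [Pfn, if_neg hα]
  refine h.congr_deriv ?_
  simp only [ofReal_zero, zero_mul, Complex.exp_zero, one_mul]
  field_simp

theorem hasDerivAt_ffn_rotation (hα : α ≠ 0) (ha0 : a 0 = 0)
    (hw : Summable fun n => ‖a n‖ * ‖w‖ ^ n) (hcos : Real.cos (Rfn a q w) ≠ 0)
    (hcos' : Real.cos (Rfn a q w + α * t) ≠ 0) :
    HasDerivAt (fun θ : ℝ => ffn α a q (cexp (θ * I) * w) t)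
      ((Real.tan (Rfn a q w + α * t) - Real.tan (Rfn a q w)) / α * (Afn a w).im) 0 := by
  have h := ((hasDerivAt_log_abs_cos_add_div_cos hcos' hcos).comp_of_eq 0
    (hasDerivAt_Rfn_rotation (q := q) ha0 hw) (by simp)).const_mul (-(1 / α))
  simp only [ffn, if_neg hα]
  refine h.congr_deriv ?_
  field_simp
  ring

theorem differentiableAt_ffn (hα : α ≠ 0) (hR : DifferentiableAt ℝ (Rfn a q) w)
    (hcos : Real.cos (Rfn a q w) ≠ 0) (hcos' : Real.cos (Rfn a q w + α * t) ≠ 0) :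
    DifferentiableAt ℝ (fun z => ffn α a q z t) w := by
  simp only [ffn, if_neg hα]
  exact ((hasDerivAt_log_abs_cos_add_div_cos hcos' hcos).differentiableAt.comp w hR).const_mul _

theorem deriv_ffn (hα : α ≠ 0) (hcos : Real.cos (Rfn a q w) ≠ 0)
    (hcos' : Real.cos (Rfn a q w + α * t) ≠ 0) :
    deriv (fun s => ffn α a q w s) t = Real.tan (Rfn a q w + α * t) := by
  simp only [ffn, if_neg hα]
  refine ((hasDerivAt_log_abs_cos_add_mul_div_cos hcos' hcos).const_mul _).deriv.trans ?_
  field_simp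

theorem differentiableAt_Pfn (hα : α ≠ 0) (hP₁ : DifferentiableAt ℝ (P1fn a q p) w)
    (hC : 1 + α * P1fn a q p w ≠ 0) : DifferentiableAt ℝ (Pfn α a q p) w := by
  rw [show Pfn α a q p = fun z => 1 / α * Real.log (1 + α * P1fn a q p z) from
    funext fun _ => if_neg hα]
  exact (((hP₁.const_mul α).const_add 1).log hC).const_mul _

theorem exp_mul_eq_of_add_Pfn_add_ffn_eq_zero {x : ℝ} (hα : α ≠ 0)
    (hC : 0 < 1 + α * P1fn a q p w)
    (hquot : 0 < Real.cos (Rfn a q w + α * t) / Real.cos (Rfn a q w))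
    (hρ : x + Pfn α a q p w + ffn α a q w t = 0) :
    Real.exp (α * x)
      = Real.cos (Rfn a q w + α * t) / ((1 + α * P1fn a q p w) * Real.cos (Rfn a q w)) := by
  have hx : α * x = Real.log (Real.cos (Rfn a q w + α * t) / Real.cos (Rfn a q w))
      - Real.log (1 + α * P1fn a q p w) := by
    simp only [Pfn, ffn, if_neg hα, Real.log_abs] at hρ
    field_simp at hρ
    linarith
  rw [hx, Real.exp_sub, Real.exp_log hquot, Real.exp_log hC, div_div, mul_comm (Real.cos _)]

end Construction

theorem stmt6_general
    (ε₀ : ℝ) (α : ℝ) (hα : α ≠ 0)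
    (a : ℕ → ℂ) (ha0 : a 0 = 0)
    (hsum : ∀ z ∈ ball (0:ℂ) ε₀, Summable fun n : ℕ => a n * z ^ n)
    (q : ℝ → ℝ)
    (hR : ContDiffOn ℝ 1 (Rfn a q) (ball 0 ε₀))
    (hRle : ∀ z ∈ ball (0:ℂ) ε₀, |Rfn a q z| ≤ 1)
    (p : ℝ → ℝ)
    (hP₁ : ContDiffOn ℝ 1 (P1fn a q p) (ball 0 ε₀))
    (hpos : ∀ z ∈ ball (0:ℂ) ε₀, 0 < 1 + α * P1fn a q p z) :
    ∀ z₁ z₂ : ℂ, z₁ ∈ ball (0:ℂ) (1 / (2 * |α|)) → z₂ ∈ ball (0:ℂ) ε₀ →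
      z₁.re + Pfn α a q p z₂ + ffn α a q z₂ z₁.im = 0 →
      (((Complex.exp ((α : ℂ) * z₁) - 1) / (α : ℂ)) * Afn a z₂ *
          ((1 / 2 : ℂ) + ((deriv (fun s : ℝ => ffn α a q z₂ s) z₁.im : ℝ) : ℂ) /
            (2 * Complex.I)) +
        Complex.I * z₂ * (wirt (fun w => ((Pfn α a q p w : ℝ) : ℂ)) z₂ +
          wirt (fun w => ((ffn α a q w z₁.im : ℝ) : ℂ)) z₂)).re = 0 := by
  intro z₁ z₂ hz₁ hz₂ hρ
  rcases eq_or_ne z₂ 0 with rfl | hz₂0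
  · simp [Afn_zero ha0]
  have hw := summable_norm_mul_pow_of_summable_on_ball hsum hz₂
  have hcos : 0 < Real.cos (Rfn a q z₂) := by
    simpa using cos_add_pos_of_abs_le_one_of_abs_lt_half (hRle z₂ hz₂) (s := 0) (by norm_num)
  have hcos' : 0 < Real.cos (Rfn a q z₂ + α * z₁.im) :=
    cos_add_pos_of_abs_le_one_of_abs_lt_half (hRle z₂ hz₂) (abs_mul_im_lt_half hα hz₁)
  have hC := hpos z₂ hz₂
  have hRdiff := (hR.differentiableOn one_ne_zero).differentiableAt (isOpen_ball.mem_nhds hz₂)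
  have hP₁diff := (hP₁.differentiableOn one_ne_zero).differentiableAt (isOpen_ball.mem_nhds hz₂)
  rw [mul_add (I * z₂), add_re, add_re, ← add_assoc,
    re_I_mul_mul_wirt_ofReal (differentiableAt_Pfn hα hP₁diff hC.ne')
      (hasDerivAt_Pfn_rotation hα ha0 hw hz₂0 hcos.ne' hC.ne'),
    re_I_mul_mul_wirt_ofReal (differentiableAt_ffn hα hRdiff hcos.ne' hcos'.ne')
      (hasDerivAt_ffn_rotation hα ha0 hw hcos.ne' hcos'.ne'),
    deriv_ffn hα hcos.ne' hcos'.ne']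
  exact re_tangency_identity hα hcos.ne' hcos'.ne' hC.ne'
    (exp_mul_eq_of_add_Pfn_add_ffn_eq_zero hα hC (div_pos hcos' hcos) hρ)

/-- For `α ≠ 0`, the holomorphic vector field
`H^{a,α} = ((e^{αz₁} − 1)/α) a(z₂) ∂/∂z₁ + i z₂ ∂/∂z₂` is tangent to `M(a,α,p,q)`:
`Re[ ((e^{αz₁} − 1)/α) a(z₂) ρ_{z₁} + i z₂ ρ_{z₂} ] = 0` on `M(a,α,p,q)`, where
`ρ_{z₁} = 1/2 + f_t(z₂, Im z₁)/(2i)` and `ρ_{z₂} = P_{z₂}(z₂) + f_{z₂}(z₂, Im z₁)`. -/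
theorem stmt6
    (ε₀ : ℝ) (hε₀ : 0 < ε₀) (α : ℝ) (hα : α ≠ 0)
    (a : ℕ → ℂ) (ha0 : a 0 = 0) (hane : ∃ n, a n ≠ 0)
    (hsum : ∀ z ∈ ball (0:ℂ) ε₀, Summable fun n : ℕ => a n * z ^ n)
    (q : ℝ → ℝ) (hq0 : q 0 = 0)
    (hR : ContDiffOn ℝ 1 (Rfn a q) (ball 0 ε₀))
    (hRle : ∀ z ∈ ball (0:ℂ) ε₀, |Rfn a q z| ≤ 1)
    (p : ℝ → ℝ)
    (hP₁ : ContDiffOn ℝ 1 (P1fn a q p) (ball 0 ε₀))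
    (hpos : ∀ z ∈ ball (0:ℂ) ε₀, 0 < 1 + α * P1fn a q p z) :
    ∀ z₁ z₂ : ℂ, z₁ ∈ ball (0:ℂ) (1 / (2 * |α|)) → z₂ ∈ ball (0:ℂ) ε₀ →
      z₁.re + Pfn α a q p z₂ + ffn α a q z₂ z₁.im = 0 →
      (((Complex.exp ((α : ℂ) * z₁) - 1) / (α : ℂ)) * Afn a z₂ *
          ((1 / 2 : ℂ) + ((deriv (fun s : ℝ => ffn α a q z₂ s) z₁.im : ℝ) : ℂ) /
            (2 * Complex.I)) +
        Complex.I * z₂ * (wirt (fun w => ((Pfn α a q p w : ℝ) : ℂ)) z₂ +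
          wirt (fun w => ((ffn α a q w z₁.im : ℝ) : ℂ)) z₂)).re = 0 :=
  stmt6_general ε₀ α hα a ha0 hsum q hR hRle p hP₁ hpos
end

section
/- With the data of the construction of M(a,α,p,q): the identity Re[ iz₂·(P₁)_{z₂}(z₂) − (1/2 + Q₀(z₂)/(2i))·a(z₂)·P₁(z₂) ] = 0 holds for all z₂ ∈ Δ_{ε₀}. -/
open Complex Metric Set

/-!
For a real `C¹` function `u`, `Re (i z u_z) = ½ ∂_θ u(z e^{iθ})|_{θ=0}`. On the circle `|z| = r`
the radial terms `p(r)`, `q(r)` are constant, `Σ aₙ/(in) zⁿ = -i Σ (aₙ/n) zⁿ`, and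
`∂_θ Σ (aₙ/n) (z e^{iθ})ⁿ = i a(z)`. Hence `∂_θ log P₁ = Re a + tan R · Im a`, which is twice
`Re [(1/2 + Q₀/(2i)) a]`. Differentiating the series term by term in `θ` is legitimate because
`|z e^{iθ}| = |z|` gives bounds uniform in `θ`.
-/

lemma summable_norm_mul_pow_of_norm_lt {𝕜 : Type*} [NontriviallyNormedField 𝕜] {a : ℕ → 𝕜}
    {x y : 𝕜} (hs : Summable fun n => a n * x ^ n) (hyx : ‖y‖ < ‖x‖) :
    Summable fun n => ‖a n‖ * ‖y‖ ^ n := by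
  set p := FormalMultilinearSeries.ofScalars 𝕜 a
  have hx : (‖x‖₊ : ENNReal) ≤ p.radius :=
    p.le_radius_of_tendsto (l := 0) <| by
      simpa [p, FormalMultilinearSeries.ofScalars_norm] using hs.tendsto_atTop_zero.norm
  have hy : (‖y‖₊ : ENNReal) < ‖x‖₊ := by exact_mod_cast hyx
  simpa [p, FormalMultilinearSeries.ofScalars_norm] using p.summable_norm_mul_pow (hy.trans_le hx)

lemma norm_mul_exp_ofReal_mul_I (z : ℂ) (θ : ℝ) : ‖z * exp (θ * I)‖ = ‖z‖ := by
  rw [norm_mul, norm_exp_ofReal_mul_I, mul_one]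

lemma hasDerivAt_mul_exp_ofReal_mul_I (z : ℂ) (θ : ℝ) :
    HasDerivAt (fun θ : ℝ => z * exp (θ * I)) (z * exp (θ * I) * I) θ := by
  simpa [mul_assoc] using ((hasDerivAt_id θ).ofReal_comp.mul_const I).cexp.const_mul z

lemma hasDerivAt_mul_exp_ofReal_mul_I_pow (z : ℂ) (n : ℕ) (θ : ℝ) :
    HasDerivAt (fun θ : ℝ => (z * exp (θ * I)) ^ n) (I * ((n : ℂ) * (z * exp (θ * I)) ^ n)) θ := by
  refine ((hasDerivAt_mul_exp_ofReal_mul_I z θ).pow n).congr_deriv ?_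
  rcases n with _ | n
  · simp
  · simp only [Nat.add_sub_cancel, pow_succ]
    ring

lemma hasDerivAt_comp_mul_exp_ofReal_mul_I {F : Type*} [NormedAddCommGroup F]
    [NormedSpace ℝ F] {f : ℂ → F} {L : ℂ →L[ℝ] F} {z : ℂ} (hf : HasFDerivAt f L z) :
    HasDerivAt (fun θ : ℝ => f (z * exp (θ * I))) (L (z * I)) 0 := by
  have hrot : HasDerivAt (fun θ : ℝ => z * exp (θ * I)) (z * I) 0 := by
    simpa using hasDerivAt_mul_exp_ofReal_mul_I z 0
  exact hf.comp_hasDerivAt_of_eq 0 hrot (by simp)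

lemma hasDerivAt_tsum_mul_exp_ofReal_mul_I_pow {c : ℕ → ℂ} {z : ℂ}
    (hc : Summable fun n : ℕ => ‖(n : ℂ) * c n‖ * ‖z‖ ^ n) (hc0 : Summable fun n => c n * z ^ n) :
    HasDerivAt (fun θ : ℝ => ∑' n, c n * (z * exp (θ * I)) ^ n)
      (I * ∑' n : ℕ, (n : ℂ) * c n * z ^ n) 0 := by
  have h := hasDerivAt_tsum hc (g := fun n (θ : ℝ) => c n * (z * exp (θ * I)) ^ n)
    (fun n θ => ((hasDerivAt_mul_exp_ofReal_mul_I_pow z n θ).const_mul (c n)).congr_deriv rfl)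
    (fun n θ => le_of_eq <| by
      simp only [norm_mul, norm_I, norm_pow, norm_exp_ofReal_mul_I, mul_one, one_mul]
      ring)
    (y₀ := 0) (by simpa using hc0) 0
  simpa [tsum_mul_left, mul_left_comm, mul_assoc] using h

lemma hasDerivAt_Sfn_mul_exp_ofReal_mul_I {a : ℕ → ℂ} (ha0 : a 0 = 0) {z : ℂ}
    (ha : Summable fun n => ‖a n‖ * ‖z‖ ^ n) :
    HasDerivAt (fun θ : ℝ => Sfn a (z * exp (θ * I))) (I * Afn a z) 0 := by
  have hcoeff : ∀ n : ℕ, (n : ℂ) * (a n / n) = a n := by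
    rintro (_ | n)
    · simp [ha0]
    · exact mul_div_cancel₀ _ (Nat.cast_ne_zero.mpr n.succ_ne_zero)
  have hdiv : ∀ n : ℕ, ‖a n / n‖ ≤ ‖a n‖ := by
    rintro (_ | n)
    · simp
    · rw [norm_div, Complex.norm_natCast]
      exact div_le_self (norm_nonneg _) (Nat.one_le_cast.mpr n.succ_pos)
  have hc0 : Summable fun n => a n / n * z ^ n :=
    .of_norm_bounded ha fun n => by
      rw [norm_mul, norm_pow]
      gcongr
      exact hdiv n
  simpa [hcoeff, Afn, Sfn] using
    hasDerivAt_tsum_mul_exp_ofReal_mul_I_pow (c := fun n => a n / n)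
      (by simpa [hcoeff] using ha) hc0

lemma Tfn_eq_neg_I_mul_Sfn (a : ℕ → ℂ) (z : ℂ) : Tfn a z = -I * Sfn a z := by
  rw [Tfn, Sfn, ← tsum_mul_left]
  congr 1
  funext n
  rw [← div_div, div_I]
  ring

-- `Real.log` is already `log |·|`, so the absolute value in `P₁` can be dropped.
lemma P1fn_of_ne_zero (a : ℕ → ℂ) (q p : ℝ → ℝ) {z : ℂ} (hz : z ≠ 0) :
    P1fn a q p z =
      Real.exp (p ‖z‖ + (Sfn a z).im - Real.log (Real.cos (q ‖z‖ - (Sfn a z).re))) := by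
  simp [P1fn, hz, Tfn_eq_neg_I_mul_Sfn, Rfn, Real.log_abs]

lemma hasDerivAt_P1fn_mul_exp_ofReal_mul_I {a : ℕ → ℂ} (ha0 : a 0 = 0) (q p : ℝ → ℝ) {z : ℂ}
    (hz : z ≠ 0) (ha : Summable fun n => ‖a n‖ * ‖z‖ ^ n) (hcos : Real.cos (Rfn a q z) ≠ 0) :
    HasDerivAt (fun θ : ℝ => P1fn a q p (z * exp (θ * I)))
      (P1fn a q p z * ((Afn a z).re + Q0fn a q z * (Afn a z).im)) 0 := by
  have hS := hasDerivAt_Sfn_mul_exp_ofReal_mul_I ha0 ha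
  have hre : HasDerivAt (fun θ : ℝ => (Sfn a (z * exp (θ * I))).re) (-(Afn a z).im) 0 := by
    simpa [Function.comp_def] using reCLM.hasFDerivAt.comp_hasDerivAt 0 hS
  have him : HasDerivAt (fun θ : ℝ => (Sfn a (z * exp (θ * I))).im) (Afn a z).re 0 := by
    simpa [Function.comp_def] using imCLM.hasFDerivAt.comp_hasDerivAt 0 hS
  have hlog := (hre.const_sub (q ‖z‖)).cos.log (by simpa [Rfn] using hcos)
  have hexp := ((him.const_add (p ‖z‖)).fun_sub hlog).exp
  have hcircle : (fun θ : ℝ => P1fn a q p (z * exp (θ * I))) = fun θ : ℝ =>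
      Real.exp (p ‖z‖ + (Sfn a (z * exp (θ * I))).im -
        Real.log (Real.cos (q ‖z‖ - (Sfn a (z * exp (θ * I))).re))) := by
    funext θ
    rw [P1fn_of_ne_zero a q p (mul_ne_zero hz (exp_ne_zero _)), norm_mul_exp_ofReal_mul_I]
  rw [hcircle]
  convert hexp using 1
  simp only [ofReal_zero, zero_mul, Complex.exp_zero, mul_one]
  rw [← P1fn_of_ne_zero a q p hz, Q0fn, Rfn, Real.tan_eq_sin_div_cos]
  field_simp
  ring

lemma re_I_mul_mul_wirt_ofReal_s10 {u : ℂ → ℝ} {z : ℂ} (hu : DifferentiableAt ℝ u z) :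
    (I * z * wirt (fun w => (u w : ℂ)) z).re = fderiv ℝ u z (z * I) / 2 := by
  have hfd : fderiv ℝ (fun w => (u w : ℂ)) z = ofRealCLM.comp (fderiv ℝ u z) :=
    (ofRealCLM.hasFDerivAt.comp z hu.hasFDerivAt).fderiv
  have hzI : z * I = z.re • I + (-z.im) • (1 : ℂ) := by
    apply Complex.ext <;> simp
  rw [wirt, hfd, hzI, map_add, map_smul, map_smul]
  simp only [ContinuousLinearMap.comp_apply, ofRealCLM_apply, smul_eq_mul, mul_re, mul_im, sub_re,
    sub_im, div_ofNat_re, div_ofNat_im, ofReal_re, ofReal_im, I_re, I_im]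
  ring

lemma re_half_add_div_two_I_mul_mul (t P : ℝ) (A : ℂ) :
    (((1 / 2 : ℂ) + (t : ℂ) / (2 * I)) * A * (P : ℂ)).re = P * (A.re + t * A.im) / 2 := by
  rw [mul_comm (2 : ℂ), ← div_div, div_I]
  simp only [mul_re, mul_im, add_re, add_im, neg_re, neg_im, div_ofNat_re, div_ofNat_im, ofReal_re,
    ofReal_im, I_re, I_im, one_div, inv_re, inv_im, re_ofNat, im_ofNat, normSq_ofNat]
  ring

theorem stmt10_general
    (ε₀ : ℝ)
    (a : ℕ → ℂ) (ha0 : a 0 = 0)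
    (hsum : ∀ z ∈ ball (0:ℂ) ε₀, Summable fun n : ℕ => a n * z ^ n)
    (q : ℝ → ℝ)
    (hRle : ∀ z ∈ ball (0:ℂ) ε₀, |Rfn a q z| ≤ 1)
    (p : ℝ → ℝ)
    (hP₁ : ContDiffOn ℝ 1 (P1fn a q p) (ball 0 ε₀)) :
    ∀ z ∈ ball (0:ℂ) ε₀,
      (Complex.I * z * wirt (fun w => ((P1fn a q p w : ℝ) : ℂ)) z -
        ((1 / 2 : ℂ) + ((Q0fn a q z : ℝ) : ℂ) / (2 * Complex.I)) * Afn a z *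
          ((P1fn a q p z : ℝ) : ℂ)).re = 0 := by
  intro z hz
  rcases eq_or_ne z 0 with rfl | hz0
  · simp [P1fn]
  obtain ⟨ρ, hzρ, hρ⟩ := exists_between (mem_ball_zero_iff.mp hz)
  have hρ0 : 0 < ρ := (norm_nonneg z).trans_lt hzρ
  have ha : Summable fun n => ‖a n‖ * ‖z‖ ^ n :=
    summable_norm_mul_pow_of_norm_lt (hsum ρ (by simpa [abs_of_pos hρ0] using hρ))
      (by simpa [abs_of_pos hρ0] using hzρ)
  have hcos : Real.cos (Rfn a q z) ≠ 0 := by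
    obtain ⟨hlo, hhi⟩ := abs_le.mp (hRle z hz)
    have := Real.pi_gt_three
    exact (Real.cos_pos_of_mem_Ioo ⟨by linarith, by linarith⟩).ne'
  have hdiff : DifferentiableAt ℝ (P1fn a q p) z :=
    (hP₁.contDiffAt (isOpen_ball.mem_nhds hz)).differentiableAt one_ne_zero
  have hangular := (hasDerivAt_comp_mul_exp_ofReal_mul_I hdiff.hasFDerivAt).unique
    (hasDerivAt_P1fn_mul_exp_ofReal_mul_I ha0 q p hz0 ha hcos)
  rw [sub_re, re_I_mul_mul_wirt_ofReal_s10 hdiff, hangular, re_half_add_div_two_I_mul_mul, sub_self]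

/-- Identity (ii) of the construction of `M(a,α,p,q)`:
`Re[ i z₂ (P₁)_{z₂}(z₂) − (1/2 + Q₀(z₂)/(2i)) a(z₂) P₁(z₂) ] = 0` on `Δ_{ε₀}`. -/
theorem stmt10
    (ε₀ : ℝ) (hε₀ : 0 < ε₀)
    (a : ℕ → ℂ) (ha0 : a 0 = 0) (hane : ∃ n, a n ≠ 0)
    (hsum : ∀ z ∈ ball (0:ℂ) ε₀, Summable fun n : ℕ => a n * z ^ n)
    (q : ℝ → ℝ) (hq0 : q 0 = 0)
    (hR : ContDiffOn ℝ 1 (Rfn a q) (ball 0 ε₀))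
    (hRle : ∀ z ∈ ball (0:ℂ) ε₀, |Rfn a q z| ≤ 1)
    (p : ℝ → ℝ)
    (hP₁ : ContDiffOn ℝ 1 (P1fn a q p) (ball 0 ε₀)) :
    ∀ z ∈ ball (0:ℂ) ε₀,
      (Complex.I * z * wirt (fun w => ((P1fn a q p w : ℝ) : ℂ)) z -
        ((1 / 2 : ℂ) + ((Q0fn a q z : ℝ) : ℂ) / (2 * Complex.I)) * Afn a z *
          ((P1fn a q p z : ℝ) : ℂ)).re = 0 :=
  stmt10_general ε₀ a ha0 hsum q hRle p hP₁
end

section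
/- With the data of the construction of M(a,α,p,q): the identity (i + f_t(z₂,t))·exp(α(it − f(z₂,t))) = i + Q₀(z₂) holds for all z₂ ∈ Δ_{ε₀} and all t ∈ (−δ₀,δ₀), where f_t denotes ∂f/∂t. -/
open Complex Metric Set

/-!
With `θ = R(z₂) + αt` one has `f_t = tan θ` and `exp(−αf) = cos θ / cos R(z₂)`, and
`(i + tan θ) cos θ = i e^{−iθ}`. Hence the left side is `i e^{−iR(z₂)} / cos R(z₂) = i + tan R(z₂)`.
The bounds `|R| ≤ 1` and `|αt| < 1/2` keep both cosines away from zero (`3/2 < π/2`).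
-/

lemma Complex.I_mul_cos_add_sin (θ : ℂ) :
    I * cos θ + sin θ = I * exp (-θ * I) := by
  rw [exp_mul_I, cos_neg, sin_neg]
  linear_combination sin θ * I_sq

lemma I_add_tan_add_mul_exp_mul_cos_div (x y : ℝ) (hx : Real.cos x ≠ 0)
    (hxy : Real.cos (x + y) ≠ 0) :
    (I + (Real.tan (x + y) : ℂ)) * (exp (y * I) * ((Real.cos (x + y) / Real.cos x : ℝ) : ℂ))
      = I + (Real.tan x : ℂ) := by
  have hx' : cos (x : ℂ) ≠ 0 := by exact_mod_cast hx
  have hxy' : cos ((x : ℂ) + y) ≠ 0 := by exact_mod_cast hxy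
  have hshift : (I * cos ((x : ℂ) + y) + sin ((x : ℂ) + y)) * exp (y * I)
      = I * cos (x : ℂ) + sin (x : ℂ) := by
    rw [Complex.I_mul_cos_add_sin, Complex.I_mul_cos_add_sin, mul_assoc, ← exp_add]
    ring_nf
  rw [mul_comm (y : ℂ) I] at hshift
  simp only [Real.tan_eq_sin_div_cos]
  push_cast
  field_simp
  linear_combination hshift

lemma Real.cos_pos_of_abs_le_three_halves {x : ℝ} (hx : |x| ≤ 3 / 2) : 0 < Real.cos x := by
  have := Real.pi_gt_three
  obtain ⟨hlo, hhi⟩ := abs_le.mp hx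
  exact Real.cos_pos_of_mem_Ioo ⟨by linarith, by linarith⟩

lemma ffn_eq_of_ne_zero {α : ℝ} (hα : α ≠ 0) (a : ℕ → ℂ) (q : ℝ → ℝ) (z : ℂ) :
    ffn α a q z = fun t => -(1 / α) *
      Real.log (Real.cos (Rfn a q z + α * t) / Real.cos (Rfn a q z)) := by
  funext t
  simp only [ffn, hα, if_false, Real.log_abs]

lemma hasDerivAt_ffn (α : ℝ) (a : ℕ → ℂ) (q : ℝ → ℝ) (z : ℂ) (t : ℝ)
    (hR : Real.cos (Rfn a q z) ≠ 0) (hθ : Real.cos (Rfn a q z + α * t) ≠ 0) :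
    HasDerivAt (ffn α a q z) (Real.tan (Rfn a q z + α * t)) t := by
  by_cases hα : α = 0
  · subst hα
    have hffn : ffn 0 a q z = fun s => Real.tan (Rfn a q z) * s := by
      funext s
      simp [ffn]
    rw [hffn, zero_mul, add_zero]
    simpa using (hasDerivAt_id t).const_mul (Real.tan (Rfn a q z))
  · rw [ffn_eq_of_ne_zero hα]
    have hcos : HasDerivAt (fun s => Real.cos (Rfn a q z + α * s))
        (-Real.sin (Rfn a q z + α * t) * α) t :=
      (((hasDerivAt_id t).const_mul α).const_add _).cos.congr_deriv (by simp)
    refine (((hcos.div_const _).log (div_ne_zero hθ hR)).const_mul (-(1 / α))).congr_deriv ?_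
    rw [Real.tan_eq_sin_div_cos]
    field_simp

lemma exp_mul_I_mul_sub_ffn (α : ℝ) (a : ℕ → ℂ) (q : ℝ → ℝ) (z : ℂ) (t : ℝ)
    (hR : Real.cos (Rfn a q z) ≠ 0)
    (hpos : 0 < Real.cos (Rfn a q z + α * t) / Real.cos (Rfn a q z)) :
    exp (α * (I * t - (ffn α a q z t : ℂ)))
      = exp ((α * t : ℝ) * I)
        * ((Real.cos (Rfn a q z + α * t) / Real.cos (Rfn a q z) : ℝ) : ℂ) := by
  by_cases hα : α = 0
  · subst hα
    simp [div_self hR]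
  · rw [← Real.exp_log hpos, Complex.ofReal_exp, ← exp_add, ffn_eq_of_ne_zero hα]
    have hα' : (α : ℂ) ≠ 0 := by exact_mod_cast hα
    congr 1
    push_cast
    field_simp
    ring

theorem stmt12_general
    (ε₀ : ℝ) (α : ℝ)
    (a : ℕ → ℂ)
    (q : ℝ → ℝ)
    (hRle : ∀ z ∈ ball (0:ℂ) ε₀, |Rfn a q z| ≤ 1) :
    ∀ z ∈ ball (0:ℂ) ε₀, ∀ t : ℝ, (α ≠ 0 → |t| < 1 / (2 * |α|)) →
      (Complex.I + ((deriv (fun s : ℝ => ffn α a q z s) t : ℝ) : ℂ)) *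
        Complex.exp ((α : ℂ) * (Complex.I * (t : ℂ) - ((ffn α a q z t : ℝ) : ℂ)))
      = Complex.I + ((Q0fn a q z : ℝ) : ℂ) := by
  intro z hz t ht
  have hαt : |α * t| ≤ 1 / 2 := by
    rcases eq_or_ne α 0 with hα | hα
    · simp [hα]
    · have hα' : 0 < |α| := abs_pos.mpr hα
      calc |α * t| = |α| * |t| := abs_mul α t
        _ ≤ |α| * (1 / (2 * |α|)) := by gcongr; exact (ht hα).le
        _ = 1 / 2 := by field_simp
  have hRz := hRle z hz
  have hcosR := Real.cos_pos_of_abs_le_three_halves (x := Rfn a q z) (by linarith)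
  have hcosθ := Real.cos_pos_of_abs_le_three_halves (x := Rfn a q z + α * t)
    (by linarith [abs_add_le (Rfn a q z) (α * t)])
  rw [(hasDerivAt_ffn α a q z t hcosR.ne' hcosθ.ne').deriv,
    exp_mul_I_mul_sub_ffn α a q z t hcosR.ne' (div_pos hcosθ hcosR)]
  exact I_add_tan_add_mul_exp_mul_cos_div _ _ hcosR.ne' hcosθ.ne'

/-- Identity (iv) of the construction of `M(a,α,p,q)`:
`(i + f_t(z₂,t)) · exp(α(it − f(z₂,t))) = i + Q₀(z₂)` for all `z₂ ∈ Δ_{ε₀}` and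
`t ∈ (−δ₀, δ₀)` (where `δ₀ = 1/(2|α|)` if `α ≠ 0` and `δ₀ = +∞` if `α = 0`). -/
theorem stmt12
    (ε₀ : ℝ) (hε₀ : 0 < ε₀) (α : ℝ)
    (a : ℕ → ℂ) (ha0 : a 0 = 0) (hane : ∃ n, a n ≠ 0)
    (hsum : ∀ z ∈ ball (0:ℂ) ε₀, Summable fun n : ℕ => a n * z ^ n)
    (q : ℝ → ℝ) (hq0 : q 0 = 0)
    (hR : ContDiffOn ℝ 1 (Rfn a q) (ball 0 ε₀))
    (hRle : ∀ z ∈ ball (0:ℂ) ε₀, |Rfn a q z| ≤ 1) :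
    ∀ z ∈ ball (0:ℂ) ε₀, ∀ t : ℝ, (α ≠ 0 → |t| < 1 / (2 * |α|)) →
      (Complex.I + ((deriv (fun s : ℝ => ffn α a q z s) t : ℝ) : ℂ)) *
        Complex.exp ((α : ℂ) * (Complex.I * (t : ℂ) - ((ffn α a q z t : ℝ) : ℂ)))
      = Complex.I + ((Q0fn a q z : ℝ) : ℂ) :=
  stmt12_general ε₀ α a q hRle
end
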